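/- arXiv:2504.19424 — 2 statements merged into one kernel-verified Lean document; each statement's English description precedes it below -/
import Mathlib

section
/- For a concave positively homogeneous F : ℝⁿ → ℝ and x interior, the discrete Euler gap dominates the infinitesimal one: for every positive integer k, ∑ᵢ [F(k·x) − F(k·x − xᵢeᵢ)] − F(x) ≥ ∑ᵢ (−F'(x; −xᵢeᵢ)) − F(x) ≥ 0. -/
open Filter Topology

/-!
Along each line through `x` the concave function `F` has difference quotients that increase as the
step shrinks, so a secant slope is bounded by the one-sided directional derivative; by homogeneity
the increment `F (k • x + d) - F (k • x)` is the secant slope of step `1 / k` at `x`, which gives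
the first inequality. For the second, Jensen's inequality makes the one-sided directional
derivative superadditive in the direction, and the directions `-(x i • e i)` add up to `-x`, along
which the directional derivative of a homogeneous function is `-F x`.
-/

/-- One-sided directional derivative: `L` is the limit of `(F (x + t • d) - F x) / t` as `t ↓ 0`. -/
def HasDirDeriv {n : ℕ} (F : (Fin n → ℝ) → ℝ) (x d : Fin n → ℝ) (L : ℝ) : Prop :=
  Tendsto (fun t : ℝ => (F (x + t • d) - F x) / t) (nhdsWithin 0 (Set.Ioi 0)) (nhds L)

variable {E : Type*} [AddCommGroup E] [Module ℝ E] {F : E → ℝ}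

namespace ConcaveOn

theorem comp_add_smul (hF : ConcaveOn ℝ Set.univ F) (x d : E) :
    ConcaveOn ℝ Set.univ (fun t : ℝ => F (x + t • d)) := by
  simpa [Function.comp_def, AffineMap.lineMap_apply_module', add_comm] using
    hF.comp_affineMap (AffineMap.lineMap x (x + d))

theorem sub_le_mul_of_tendsto (hF : ConcaveOn ℝ Set.univ F) {x d : E} {L : ℝ}
    (hL : Tendsto (fun t : ℝ => (F (x + t • d) - F x) / t) (𝓝[>] 0) (𝓝 L))
    {t : ℝ} (ht : 0 < t) : F (x + t • d) - F x ≤ t * L := by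
  have hderiv : HasDerivWithinAt (fun t : ℝ => F (x + t • d)) L (Set.Ioi 0) 0 := by
    rw [hasDerivWithinAt_iff_tendsto_slope' Set.self_notMem_Ioi]
    convert hL using 2 with s
    simp [slope_def_field]
  have hslope := (hF.comp_add_smul x d).slope_le_of_hasDerivWithinAt_Ioi
    (Set.mem_univ 0) (Set.mem_univ t) ht hderiv
  simp only [slope_def_field, zero_smul, add_zero, sub_zero] at hslope
  rwa [div_le_iff₀' ht] at hslope

theorem sum_le_of_tendsto {ι : Type*} [Fintype ι] (hF : ConcaveOn ℝ Set.univ F)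
    {x : E} {d : ι → E} {L : ι → ℝ}
    (hL : ∀ i, Tendsto (fun t : ℝ => (F (x + t • d i) - F x) / t) (𝓝[>] 0) (𝓝 (L i)))
    {M : ℝ} (hM : Tendsto (fun t : ℝ => (F (x + t • ∑ i, d i) - F x) / t) (𝓝[>] 0) (𝓝 M)) :
    ∑ i, L i ≤ M := by
  rcases isEmpty_or_nonempty ι with hι | hι
  · simp only [Finset.univ_eq_empty, Finset.sum_empty, smul_zero, add_zero, sub_self,
      zero_div] at hM ⊢
    exact (tendsto_nhds_unique tendsto_const_nhds hM).le
  set m : ℝ := (Fintype.card ι : ℝ)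
  have hm : 0 < m := by positivity
  have hscale : Tendsto (fun t : ℝ => m * t) (𝓝[>] 0) (𝓝[>] 0) :=
    tendsto_iff_comap.2 (comap_mulLeft_nhdsGT_zero hm).ge
  have hsum : Tendsto (fun t : ℝ => ∑ i, (F (x + (m * t) • d i) - F x) / (m * t))
      (𝓝[>] 0) (𝓝 (∑ i, L i)) :=
    tendsto_finsetSum _ fun i _ => (hL i).comp hscale
  refine le_of_tendsto_of_tendsto hsum hM ?_
  filter_upwards [self_mem_nhdsWithin] with t (ht : 0 < t)
  -- `x + t • ∑ i, d i` is the barycentre of the points `x + (m * t) • d i`.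
  have hcentre : ∑ i, m⁻¹ • (x + (m * t) • d i) = x + t • ∑ i, d i := by
    simp only [smul_add, smul_smul, Finset.sum_add_distrib, Finset.sum_const, Finset.card_univ,
      ← Finset.smul_sum]
    rw [inv_mul_cancel_left₀ hm.ne', ← Nat.cast_smul_eq_nsmul ℝ, smul_smul,
      mul_inv_cancel₀ hm.ne', one_smul]
  have hjensen : ∑ i, m⁻¹ • F (x + (m * t) • d i) ≤ F (x + t • ∑ i, d i) :=
    hcentre ▸ hF.le_map_sum (fun _ _ => by positivity) (by simp [m, hm.ne'])
      (fun _ _ => Set.mem_univ _)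
  calc ∑ i, (F (x + (m * t) • d i) - F x) / (m * t)
      = (∑ i, m⁻¹ • F (x + (m * t) • d i) - F x) / t := by
        rw [← Finset.sum_div, Finset.sum_sub_distrib, Finset.sum_const, Finset.card_univ,
          nsmul_eq_mul, ← Finset.smul_sum, smul_eq_mul]
        field_simp
        rfl
    _ ≤ (F (x + t • ∑ i, d i) - F x) / t := by gcongr

theorem sub_le_of_tendsto_of_homogeneous (hF : ConcaveOn ℝ Set.univ F)
    (hhom : ∀ c : ℝ, 0 < c → ∀ x, F (c • x) = c * F x) {x d : E} {L : ℝ}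
    (hL : Tendsto (fun t : ℝ => (F (x + t • d) - F x) / t) (𝓝[>] 0) (𝓝 L))
    {c : ℝ} (hc : 0 < c) : F (c • x + d) - F (c • x) ≤ L := by
  have hrescale : c • x + d = c • (x + c⁻¹ • d) := by
    rw [smul_add, smul_smul, mul_inv_cancel₀ hc.ne', one_smul]
  have hsecant := hF.sub_le_mul_of_tendsto hL (inv_pos.2 hc)
  rw [hrescale, hhom c hc, hhom c hc, ← mul_sub]
  calc c * (F (x + c⁻¹ • d) - F x) ≤ c * (c⁻¹ * L) := by gcongr
    _ = L := by field_simp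

end ConcaveOn

theorem tendsto_dirQuotient_neg_self_of_homogeneous
    (hhom : ∀ c : ℝ, 0 < c → ∀ x, F (c • x) = c * F x) (x : E) :
    Tendsto (fun t : ℝ => (F (x + t • -x) - F x) / t) (𝓝[>] 0) (𝓝 (-F x)) := by
  refine tendsto_const_nhds.congr' ?_
  filter_upwards [Ioo_mem_nhdsGT (zero_lt_one' ℝ)] with t ⟨ht0, ht1⟩
  have hline : x + t • -x = (1 - t) • x := by
    rw [sub_smul, one_smul, smul_neg, sub_eq_add_neg]
  rw [hline, hhom _ (sub_pos.2 ht1)]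
  field_simp
  ring

theorem stmt15_general {n : ℕ} (F : (Fin n → ℝ) → ℝ)
    (hconc : ConcaveOn ℝ Set.univ F)
    (hhom : ∀ c : ℝ, 0 < c → ∀ x, F (c • x) = c * F x)
    (x : Fin n → ℝ)
    (N : Fin n → ℝ)
    (hN : ∀ i, HasDirDeriv F x (-(x i • (Pi.single i 1 : Fin n → ℝ))) (N i)) :
    ∀ k : ℕ, 0 < k →
      ((∑ i, (F ((k : ℝ) • x) - F ((k : ℝ) • x - x i • (Pi.single i 1 : Fin n → ℝ)))) - F x
          ≥ (∑ i, (-(N i))) - F x) ∧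
      (∑ i, (-(N i))) - F x ≥ 0 := by
  intro k hk
  have hdirections : ∑ i, -(x i • (Pi.single i 1 : Fin n → ℝ)) = -x := by
    rw [Finset.sum_neg_distrib, ← pi_eq_sum_univ']
  have hsum : ∑ i, N i ≤ -F x :=
    hconc.sum_le_of_tendsto hN
      (hdirections ▸ tendsto_dirQuotient_neg_self_of_homogeneous hhom x)
  refine ⟨sub_le_sub_right (Finset.sum_le_sum fun i _ => ?_) _, ?_⟩
  · have hstep := hconc.sub_le_of_tendsto_of_homogeneous hhom (hN i) (Nat.cast_pos.2 hk)
    rw [← sub_eq_add_neg] at hstep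
    linarith
  · rw [Finset.sum_neg_distrib]
    linarith

theorem stmt15 {n : ℕ} (F : (Fin n → ℝ) → ℝ)
    (hconc : ConcaveOn ℝ Set.univ F)
    (hhom : ∀ c : ℝ, 0 < c → ∀ x, F (c • x) = c * F x)
    (x : Fin n → ℝ) (hx : x ∈ interior {y : Fin n → ℝ | ∀ i, 0 ≤ y i})
    (N : Fin n → ℝ)
    (hN : ∀ i, HasDirDeriv F x (-(x i • (Pi.single i 1 : Fin n → ℝ))) (N i)) :
    ∀ k : ℕ, 0 < k →
      ((∑ i, (F ((k : ℝ) • x) - F ((k : ℝ) • x - x i • (Pi.single i 1 : Fin n → ℝ)))) - F x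
          ≥ (∑ i, (-(N i))) - F x) ∧
      (∑ i, (-(N i))) - F x ≥ 0 :=
  stmt15_general F hconc hhom x N hN
end

section
/- Discrete Euler condition implies the infinitesimal one: for concave positively homogeneous F : ℝⁿ → ℝ and x interior, if for some k the discrete Euler gap ∑ᵢ [F(kx) − F(kx − xᵢeᵢ)] − F(x) = 0, then the infinitesimal Euler gap ∑ᵢ (−F'(x; −xᵢeᵢ)) − F(x) = 0. -/
/-!
Write `dᵢ = -xᵢ eᵢ`, so that `∑ dᵢ = -x`. By homogeneity the `i`-th discrete Euler term is
`-(F (x + dᵢ/k) - F x) / (1/k)`, the negative of a difference quotient of `F` at `x` in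
direction `dᵢ`. Difference quotients of a concave function increase as the step shrinks, so each
is at most `F'(x; dᵢ)`, and the vanishing discrete gap gives `∑ (-F'(x; dᵢ)) ≤ F x`. Conversely,
Jensen's inequality makes `d ↦ F'(x; d)` superadditive, so `∑ F'(x; dᵢ) ≤ F'(x; -x) = -F x`,
the last equality again by homogeneity.
-/

open Filter Topology

open Finset Set

section
variable {E : Type*} [AddCommGroup E] [Module ℝ E] {F : E → ℝ}

theorem ConcaveOn.dirSlope_antitone (hF : ConcaveOn ℝ univ F) (x d : E) {s t : ℝ}
    (ht : 0 < t) (hts : t ≤ s) :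
    (F (x + s • d) - F x) / s ≤ (F (x + t • d) - F x) / t := by
  have hline : ConcaveOn ℝ univ fun r : ℝ => F (x + r • d) := by
    simpa [Function.comp_def, AffineMap.lineMap_apply, add_comm] using
      hF.comp_affineMap (AffineMap.lineMap x (x + d))
  simpa [slope_def_field] using
    hline.slope_anti (mem_univ 0) ⟨mem_univ t, ht.ne'⟩ ⟨mem_univ s, (ht.trans_le hts).ne'⟩ hts

theorem ConcaveOn.sum_dirSlope_le {ι : Type*} [Fintype ι] [Nonempty ι] (hF : ConcaveOn ℝ univ F)
    (x : E) (d : ι → E) {t : ℝ} (ht : 0 < t) :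
    ∑ i, (F (x + (Fintype.card ι * t) • d i) - F x) / (Fintype.card ι * t)
      ≤ (F (x + t • ∑ i, d i) - F x) / t := by
  set m : ℝ := (Fintype.card ι : ℝ)
  have hm : 0 < m := by positivity
  have hw : ∑ _i : ι, m⁻¹ = 1 := by simp [m]
  have hjensen := hF.le_map_sum (t := univ) (fun i _ => inv_nonneg.2 hm.le) hw
    (fun i _ => mem_univ (x + (m * t) • d i))
  have hcenter : ∑ i : ι, m⁻¹ • (x + (m * t) • d i) = x + t • ∑ i, d i := by
    simp only [smul_add, smul_smul, sum_add_distrib, sum_const, card_univ, ← smul_sum]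
    rw [inv_mul_cancel_left₀ hm.ne', ← Nat.cast_smul_eq_nsmul ℝ, smul_smul,
      mul_inv_cancel₀ hm.ne', one_smul]
  rw [hcenter] at hjensen
  simp only [smul_eq_mul] at hjensen
  rw [le_div_iff₀ ht, sum_mul]
  have hterm : ∀ i, (F (x + (m * t) • d i) - F x) / (m * t) * t
      = m⁻¹ * F (x + (m * t) • d i) - m⁻¹ * F x := fun i => by field_simp
  simp only [hterm, sum_sub_distrib, sum_const, card_univ, nsmul_eq_mul]
  rw [← mul_assoc, mul_inv_cancel₀ hm.ne', one_mul]
  linarith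

theorem sub_map_smul_add_eq_neg_dirSlope (hhom : ∀ c : ℝ, 0 < c → ∀ x, F (c • x) = c * F x)
    (x d : E) {c : ℝ} (hc : 0 < c) :
    F (c • x) - F (c • x + d) = -((F (x + c⁻¹ • d) - F x) / c⁻¹) := by
  have hscale : c • x + d = c • (x + c⁻¹ • d) := by
    rw [smul_add, smul_smul, mul_inv_cancel₀ hc.ne', one_smul]
  rw [hscale, hhom c hc, hhom c hc, div_inv_eq_mul]
  ring

end

section HasDirDeriv
variable {n : ℕ} {F : (Fin n → ℝ) → ℝ} {x : Fin n → ℝ}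

theorem HasDirDeriv.dirSlope_le {d : Fin n → ℝ} {L : ℝ} (hL : HasDirDeriv F x d L)
    (hF : ConcaveOn ℝ univ F) {s : ℝ} (hs : 0 < s) :
    (F (x + s • d) - F x) / s ≤ L := by
  refine ge_of_tendsto hL ?_
  filter_upwards [Ioo_mem_nhdsGT hs] with t ht
  exact hF.dirSlope_antitone x d ht.1 ht.2.le

theorem HasDirDeriv.sum_le {ι : Type*} [Fintype ι] (hF : ConcaveOn ℝ univ F)
    {d : ι → Fin n → ℝ} {N : ι → ℝ} (hN : ∀ i, HasDirDeriv F x (d i) (N i))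
    {M : ℝ} (hM : HasDirDeriv F x (∑ i, d i) M) : ∑ i, N i ≤ M := by
  cases isEmpty_or_nonempty ι
  · simp only [HasDirDeriv, univ_eq_empty, sum_empty, smul_zero, add_zero, sub_self,
      zero_div] at hM ⊢
    exact (tendsto_nhds_unique tendsto_const_nhds hM).le
  have hm : (0 : ℝ) < Fintype.card ι := by positivity
  have hscale : Tendsto (fun t : ℝ => (Fintype.card ι : ℝ) * t) (𝓝[>] 0) (𝓝[>] 0) :=
    tendsto_iff_comap.2 (comap_mulLeft_nhdsGT_zero hm).ge
  refine le_of_tendsto_of_tendsto (tendsto_finsetSum _ fun i _ => (hN i).comp hscale) hM ?_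
  filter_upwards [self_mem_nhdsWithin] with t ht
  exact hF.sum_dirSlope_le x d ht

theorem hasDirDeriv_neg_self (hhom : ∀ c : ℝ, 0 < c → ∀ x, F (c • x) = c * F x)
    (x : Fin n → ℝ) : HasDirDeriv F x (-x) (-F x) := by
  refine tendsto_const_nhds.congr' ?_
  filter_upwards [Ioo_mem_nhdsGT one_pos] with t ht
  rw [show x + t • -x = (1 - t) • x by module, hhom _ (by linarith [ht.2]), eq_div_iff ht.1.ne']
  ring

end HasDirDeriv
theorem stmt16_general {n : ℕ} (F : (Fin n → ℝ) → ℝ)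
    (hconc : ConcaveOn ℝ Set.univ F)
    (hhom : ∀ c : ℝ, 0 < c → ∀ x, F (c • x) = c * F x)
    (x : Fin n → ℝ)
    (N : Fin n → ℝ)
    (hN : ∀ i, HasDirDeriv F x (-(x i • (Pi.single i 1 : Fin n → ℝ))) (N i))
    (k : ℕ) (hk : 0 < k)
    (hgap : (∑ i, (F ((k : ℝ) • x) - F ((k : ℝ) • x - x i • (Pi.single i 1 : Fin n → ℝ)))) - F x = 0) :
    (∑ i, (-(N i))) - F x = 0 := by
  set d : Fin n → Fin n → ℝ := fun i => -(x i • Pi.single i 1)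
  have hd : ∑ i, d i = -x := by
    simp [d, sum_neg_distrib, ← Pi.single_smul, univ_sum_single]
  have hupper : ∑ i, N i ≤ -F x :=
    HasDirDeriv.sum_le hconc hN (hd ▸ hasDirDeriv_neg_self hhom x)
  have hlower : -F x ≤ ∑ i, N i := by
    have hkpos : (0 : ℝ) < k := by exact_mod_cast hk
    simp only [sub_eq_add_neg (_ • x), sub_map_smul_add_eq_neg_dirSlope hhom x _ hkpos,
      sub_eq_zero, sum_neg_distrib] at hgap
    rw [← hgap, neg_neg]
    exact sum_le_sum fun i _ => (hN i).dirSlope_le hconc (by positivity)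
  rw [sum_neg_distrib]
  linarith

theorem stmt16 {n : ℕ} (F : (Fin n → ℝ) → ℝ)
    (hconc : ConcaveOn ℝ Set.univ F)
    (hhom : ∀ c : ℝ, 0 < c → ∀ x, F (c • x) = c * F x)
    (x : Fin n → ℝ) (hx : x ∈ interior {y : Fin n → ℝ | ∀ i, 0 ≤ y i})
    (N : Fin n → ℝ)
    (hN : ∀ i, HasDirDeriv F x (-(x i • (Pi.single i 1 : Fin n → ℝ))) (N i))
    (k : ℕ) (hk : 0 < k)
    (hgap : (∑ i, (F ((k : ℝ) • x) - F ((k : ℝ) • x - x i • (Pi.single i 1 : Fin n → ℝ)))) - F x = 0) :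
    (∑ i, (-(N i))) - F x = 0 :=
  stmt16_general F hconc hhom x N hN k hk hgap
end
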